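/- limsup_{n→∞} 2·b(n) / (2n)^{log₃(√2+1)} ≥ 1. -/

import Mathlib

open Filter Real Topology

/-!
Write `α = log₃ (√2 + 1)`, so that `3 ^ α = √2 + 1`.

Along `m_n = (3 ^ (n + 1) + 1) / 2`, whose ternary expansion is `1…12`, the recursion gives
`2 b(m_n) = (√2 + 1) ^ (n + 1) + (√2 - 1) ^ (n + 1) ≥ (3 ^ (n + 1)) ^ α`, while
`(2 m_n) ^ α = (3 ^ (n + 1) + 1) ^ α`; the ratio tends to `1`.

The sequence is also bounded above, which matters because `limsup` of a sequence unbounded above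
is a junk value. Dividing `m` by `3` shrinks `max (b m) (b (m + 1))` by at most the factor
`√2 + 1 = 3 ^ α`, so `b m ≤ (3 m) ^ α`.
-/

theorem le_limsup_of_tendsto_of_le_comp {ι κ β : Type*} [ConditionallyCompleteLinearOrder β]
    [TopologicalSpace β] [OrderTopology β] [DenselyOrdered β] {l : Filter ι} [l.NeBot]
    {l' : Filter κ} {u : κ → β} {φ : ι → κ} {g : ι → β} {a : β}
    (hφ : Tendsto φ l l') (hg : Tendsto g l (𝓝 a)) (hle : ∀ i, g i ≤ u (φ i))
    (hu : IsBoundedUnder (· ≤ ·) l' u) : a ≤ limsup u l' := by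
  refine le_of_forall_lt_imp_le_of_dense fun d hd ↦ le_limsup_of_frequently_le ?_ hu
  have hd' : ∀ᶠ i in l, d ≤ u (φ i) :=
    ((tendsto_order.1 hg).1 d hd).mono fun i hi ↦ hi.le.trans (hle i)
  exact hφ.frequently hd'.frequently

theorem le_mul_pow_length_digits {k : ℕ} (hk : 1 < k) {A : ℝ} (hA : 0 ≤ A) {c : ℕ → ℝ}
    (hc : ∀ m, m ≠ 0 → c m ≤ A * c (m / k)) (m : ℕ) :
    c m ≤ c 0 * A ^ (Nat.digits k m).length := by
  induction m using Nat.strong_induction_on with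
  | _ m ih =>
    rcases eq_or_ne m 0 with rfl | hm
    · simp
    calc c m ≤ A * c (m / k) := hc m hm
      _ ≤ A * (c 0 * A ^ (Nat.digits k (m / k)).length) :=
        mul_le_mul_of_nonneg_left (ih _ (Nat.div_lt_self (by omega) hk)) hA
      _ = c 0 * A ^ (Nat.digits k m).length := by
        rw [@Nat.digits_def' k hk m (by omega), List.length_cons, pow_succ]; ring

theorem le_mul_rpow_of_le_rpow_mul_div {k : ℕ} (hk : 1 < k) {α : ℝ} (hα : 0 ≤ α) {c : ℕ → ℝ}
    (hc0 : 0 ≤ c 0) (hc : ∀ m, m ≠ 0 → c m ≤ (k : ℝ) ^ α * c (m / k)) {m : ℕ} (hm : m ≠ 0) :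
    c m ≤ c 0 * ((k : ℝ) * m) ^ α := by
  refine (le_mul_pow_length_digits hk (by positivity) hc m).trans
    (mul_le_mul_of_nonneg_left ?_ hc0)
  rw [← rpow_natCast, ← rpow_mul (by positivity), mul_comm, rpow_mul (by positivity), rpow_natCast]
  exact rpow_le_rpow (by positivity) (mod_cast Nat.base_pow_length_digits_le k m hk hm) hα

/-- The number written in base 3 with `n + 1` ones, `(3 ^ (n + 1) - 1) / 2`. -/
def ternaryRepunit : ℕ → ℕ
  | 0 => 1
  | n + 1 => 3 * ternaryRepunit n + 1

theorem two_mul_ternaryRepunit_add_one (n : ℕ) : 2 * ternaryRepunit n + 1 = 3 ^ (n + 1) := by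
  induction n with
  | zero => rfl
  | succ n ih => rw [ternaryRepunit, pow_succ]; omega

theorem tendsto_ternaryRepunit_atTop : Tendsto ternaryRepunit atTop atTop :=
  (strictMono_nat_of_lt_succ fun n ↦ by rw [ternaryRepunit]; omega).tendsto_atTop

structure IsNorthshieldSeq (b : ℕ → ℝ) : Prop where
  zero : b 0 = 0
  one : b 1 = 1
  three_mul : ∀ n, b (3 * n) = b n
  three_mul_add_one : ∀ n, b (3 * n + 1) = √2 * b n + b (n + 1)
  three_mul_add_two : ∀ n, b (3 * n + 2) = b n + √2 * b (n + 1)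

namespace IsNorthshieldSeq

variable {b : ℕ → ℝ}

theorem two (hb : IsNorthshieldSeq b) : b 2 = √2 := by
  simpa [hb.zero, hb.one] using hb.three_mul_add_two 0

theorem nonneg (hb : IsNorthshieldSeq b) (n : ℕ) : 0 ≤ b n := by
  induction n using Nat.strong_induction_on with
  | _ n ih =>
    rcases lt_or_ge n 2 with hn | hn
    · interval_cases n <;> simp [hb.zero, hb.one]
    obtain ⟨q, rfl | rfl | rfl⟩ : ∃ q, n = 3 * q ∨ n = 3 * q + 1 ∨ n = 3 * q + 2 :=
      ⟨n / 3, by omega⟩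
    · rw [hb.three_mul]; exact ih q (by omega)
    · rw [hb.three_mul_add_one]
      exact add_nonneg (mul_nonneg (sqrt_nonneg 2) (ih q (by omega))) (ih (q + 1) (by omega))
    · rw [hb.three_mul_add_two]
      exact add_nonneg (ih q (by omega)) (mul_nonneg (sqrt_nonneg 2) (ih (q + 1) (by omega)))

theorem le_mul_max (hb : IsNorthshieldSeq b) (q : ℕ) {i : ℕ} (hi : i ≤ 3) :
    b (3 * q + i) ≤ (√2 + 1) * max (b q) (b (q + 1)) := by
  have hq := le_max_left (b q) (b (q + 1))
  have hq' := le_max_right (b q) (b (q + 1))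
  have h2 := one_lt_sqrt_two
  have hM : 0 ≤ max (b q) (b (q + 1)) := (hb.nonneg q).trans hq
  interval_cases i
  · rw [add_zero, hb.three_mul]; nlinarith
  · rw [hb.three_mul_add_one]; nlinarith
  · rw [hb.three_mul_add_two]; nlinarith
  · rw [show 3 * q + 3 = 3 * (q + 1) by ring, hb.three_mul]; nlinarith

theorem max_le_mul_max_div_three (hb : IsNorthshieldSeq b) (m : ℕ) :
    max (b m) (b (m + 1)) ≤ (√2 + 1) * max (b (m / 3)) (b (m / 3 + 1)) := by
  obtain ⟨q, i, hi, rfl⟩ : ∃ q i, i < 3 ∧ m = 3 * q + i := ⟨m / 3, m % 3, by omega, by omega⟩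
  rw [show (3 * q + i) / 3 = q by omega, add_assoc]
  exact max_le (hb.le_mul_max q (by omega)) (hb.le_mul_max q (by omega))

theorem le_rpow (hb : IsNorthshieldSeq b) {m : ℕ} (hm : m ≠ 0) :
    b m ≤ (3 * m) ^ logb 3 (√2 + 1) := by
  have hα : 0 ≤ logb 3 (√2 + 1) := logb_nonneg (by norm_num) (by linarith [sqrt_nonneg 2])
  have h3α : ((3 : ℕ) : ℝ) ^ logb 3 (√2 + 1) = √2 + 1 := by
    rw [Nat.cast_ofNat, rpow_logb (by norm_num) (by norm_num) (by positivity)]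
  have hc := le_mul_rpow_of_le_rpow_mul_div (c := fun m ↦ max (b m) (b (m + 1))) (by norm_num) hα
    (by simp [hb.zero, hb.one]) (fun m _ ↦ h3α ▸ hb.max_le_mul_max_div_three m) hm
  simpa [hb.zero, hb.one] using (le_max_left _ _).trans hc

theorem ternaryRepunit_eq (hb : IsNorthshieldSeq b) (n : ℕ) :
    b (ternaryRepunit n) = ((√2 + 1) ^ (n + 1) - (√2 - 1) ^ (n + 1)) / 2 ∧
      b (ternaryRepunit n + 1) = ((√2 + 1) ^ (n + 1) + (√2 - 1) ^ (n + 1)) / 2 := by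
  induction n with
  | zero => constructor <;> simp [ternaryRepunit, hb.one, hb.two]
  | succ n ih =>
    rw [ternaryRepunit, hb.three_mul_add_one, add_assoc, hb.three_mul_add_two, ih.1, ih.2]
    constructor <;> ring

theorem div_rpow_le (hb : IsNorthshieldSeq b) (n : ℕ) :
    2 * b n / (2 * (n : ℝ)) ^ logb 3 (√2 + 1) ≤ 2 * (3 / 2) ^ logb 3 (√2 + 1) := by
  rcases eq_or_ne n 0 with rfl | hn
  · rw [hb.zero, mul_zero, zero_div]; positivity
  have hpos : 0 < (2 * (n : ℝ)) ^ logb 3 (√2 + 1) := by positivity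
  rw [div_le_iff₀ hpos, mul_assoc, ← mul_rpow (by norm_num) (by positivity)]
  rw [show (3 / 2 : ℝ) * (2 * n) = 3 * n by ring]
  linarith [hb.le_rpow hn]

theorem rpow_le_div_rpow_ternaryRepunit (hb : IsNorthshieldSeq b) (n : ℕ) :
    ((3 ^ (n + 1) : ℕ) / ((3 ^ (n + 1) : ℕ) + 1) : ℝ) ^ logb 3 (√2 + 1) ≤
      2 * b (ternaryRepunit n + 1) /
        (2 * ((ternaryRepunit n + 1 : ℕ) : ℝ)) ^ logb 3 (√2 + 1) := by
  have h2m : 2 * ((ternaryRepunit n + 1 : ℕ) : ℝ) = (3 ^ (n + 1) : ℕ) + 1 := by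
    rw [← two_mul_ternaryRepunit_add_one]; push_cast; ring
  have hpow : ((3 ^ (n + 1) : ℕ) : ℝ) ^ logb 3 (√2 + 1) = (√2 + 1) ^ (n + 1) := by
    rw [Nat.cast_pow, Nat.cast_ofNat, ← rpow_natCast, ← rpow_mul (by norm_num), mul_comm,
      rpow_mul (by norm_num), rpow_logb (by norm_num) (by norm_num) (by positivity), rpow_natCast]
  have hb2 : (√2 + 1) ^ (n + 1) ≤ 2 * b (ternaryRepunit n + 1) := by
    rw [(hb.ternaryRepunit_eq n).2]
    have : 0 ≤ (√2 - 1) ^ (n + 1) := pow_nonneg (by linarith [one_lt_sqrt_two]) _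
    linarith
  rw [h2m, div_rpow (by positivity) (by positivity), hpow]
  gcongr

end IsNorthshieldSeq

theorem northshield_limsup_ge (b : ℕ → ℝ)
    (hb0 : b 0 = 0) (hb1 : b 1 = 1)
    (hrec0 : ∀ n : ℕ, b (3 * n) = b n)
    (hrec1 : ∀ n : ℕ, b (3 * n + 1) = Real.sqrt 2 * b n + b (n + 1))
    (hrec2 : ∀ n : ℕ, b (3 * n + 2) = b n + Real.sqrt 2 * b (n + 1)) :
    1 ≤ Filter.limsup
      (fun n : ℕ => 2 * b n / (2 * (n : ℝ)) ^ Real.logb 3 (Real.sqrt 2 + 1))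
      Filter.atTop := by
  have hb : IsNorthshieldSeq b := ⟨hb0, hb1, hrec0, hrec1, hrec2⟩
  have hpow : Tendsto (fun n : ℕ ↦ 3 ^ (n + 1)) atTop atTop :=
    (tendsto_pow_atTop_atTop_of_one_lt (by norm_num)).comp (tendsto_add_atTop_nat 1)
  have hlim : Tendsto (fun n : ℕ ↦ ((3 ^ (n + 1) : ℕ) / ((3 ^ (n + 1) : ℕ) + 1) : ℝ) ^
      logb 3 (√2 + 1)) atTop (𝓝 1) := by
    simpa using ((tendsto_natCast_div_add_atTop (1 : ℝ)).comp hpow).rpow_const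
      (p := logb 3 (√2 + 1)) (Or.inl one_ne_zero)
  exact le_limsup_of_tendsto_of_le_comp
    ((tendsto_add_atTop_nat 1).comp tendsto_ternaryRepunit_atTop) hlim
    hb.rpow_le_div_rpow_ternaryRepunit (isBoundedUnder_of ⟨_, hb.div_rpow_le⟩)
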